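/- Let $s \in (0,1)$, $r \ge 2^{3/s}$, $\ell(t) := (r-t)^{-2s}$ and $\gamma_r := [\ell(r-1) - \ell(r/2) - \ell'(r/2)(r/2-1)]^{-1}$. Define $h : [0,\infty) \to [0,1]$ by $h(t) = 0$ for $t \in [0, r/2)$, $h(t) = \gamma_r(\ell(t) - \ell(r/2) - \ell'(r/2)(t - r/2))$ for $t \in [r/2, r-1)$, and $h(t) = 1$ for $t \ge r-1$. Then $h$ is $C^{1,1}$ on $[0, r-1]$, $h(r/2) = 0$, $h'(r/2) = 0$, $h(r-1) = 1$, and for all $t \in (r/2, r-1)$ one has $|h'(t)| \le 4(r-t)^{-2s-1}$ and $|h''(t)| \le 12(r-t)^{-2s-2}$. -/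

import Mathlib

/-! Since `r ≥ 2^{3/s} ≥ 8`, one has `ℓ(r/2) ≤ 1/16` and `ℓ'(r/2)(r/2 - 1) ≤ 2sℓ(r/2) ≤ 1/8`,
so `γ_r⁻¹ ≥ 1/2`, i.e. `0 < γ_r ≤ 2`. On `[r/2, r-1]`, `h` is `γ_r` times the gap between the
convex function `ℓ` and its tangent at `r/2`: it increases from `0` to `1`, and its derivative
`γ_r(ℓ' - ℓ'(r/2))` vanishes at `r/2`, so it glues to the zero branch in `C¹`. For `t < r` one
has `h' = max(γ_r(ℓ' - ℓ'(r/2)), 0)`, which is `12`-Lipschitz where `r - t ≥ 1` because there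
`γ_r ℓ'' ≤ 2 · 2s(2s+1) ≤ 12`; the same estimates give the pointwise bounds. -/

open Set

noncomputable section

/-- `ℓ(t) = (r-t)^{-2s}`. -/
def ell (s r t : ℝ) : ℝ := (r - t) ^ (-(2*s))

/-- `ℓ'(t) = 2s (r-t)^{-2s-1}`. -/
def ellD (s r t : ℝ) : ℝ := 2*s*(r - t) ^ (-(2*s) - 1)

/-- The normalization constant `γ_r`. -/
def gammaR (s r : ℝ) : ℝ :=
  (ell s r (r - 1) - ell s r (r/2) - ellD s r (r/2) * (r/2 - 1))⁻¹

/-- The barrier profile `h`. -/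
def hBar (s r t : ℝ) : ℝ :=
  if t < r/2 then 0
  else if t < r - 1 then
    gammaR s r * (ell s r t - ell s r (r/2) - ellD s r (r/2) * (t - r/2))
  else 1

/-- The derivative of `h` on `[0, r-1]`. -/
def hBarD (s r t : ℝ) : ℝ :=
  if t ≤ r/2 then 0 else gammaR s r * (ellD s r t - ellD s r (r/2))

def ellDD (s r t : ℝ) : ℝ := 2*s*(2*s+1)*(r - t) ^ (-(2*s) - 2)

def hMid (s r t : ℝ) : ℝ :=
  gammaR s r * (ell s r t - ell s r (r/2) - ellD s r (r/2) * (t - r/2))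

section

variable {s r t : ℝ}

theorem hasDerivAt_ell (ht : t < r) : HasDerivAt (ell s r) (ellD s r t) t := by
  refine (((hasDerivAt_id t).const_sub r).rpow_const
    (Or.inl (sub_ne_zero.2 ht.ne'))).congr_deriv ?_
  simp only [ellD, id]
  ring

theorem hasDerivAt_ellD (ht : t < r) : HasDerivAt (ellD s r) (ellDD s r t) t := by
  refine ((((hasDerivAt_id t).const_sub r).rpow_const
    (Or.inl (sub_ne_zero.2 ht.ne'))).const_mul (2*s)).congr_deriv ?_
  simp only [ellDD, id, show -(2*s) - 1 - 1 = -(2*s) - 2 by ring]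
  ring

theorem ellD_nonneg (hs : 0 ≤ s) (ht : t ≤ r) : 0 ≤ ellD s r t :=
  mul_nonneg (by linarith) (Real.rpow_nonneg (by linarith) _)

theorem ellD_monotoneOn (hs : 0 ≤ s) : MonotoneOn (ellD s r) (Iio r) := by
  intro x hx y hy hxy
  have hry : (0:ℝ) < r - y := sub_pos.2 hy
  exact mul_le_mul_of_nonneg_left
    (Real.rpow_le_rpow_of_nonpos hry (by linarith) (by linarith)) (by linarith)

theorem ell_sub_one : ell s r (r - 1) = 1 := by
  rw [ell, sub_sub_cancel, Real.one_rpow]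

theorem ellD_half_mul_le (hs : 0 ≤ s) (hr : 2 ≤ r) :
    ellD s r (r/2) * (r/2 - 1) ≤ 2 * s * ell s r (r/2) := by
  have hr2 : (0:ℝ) < r/2 := by linarith
  have hsplit : ellD s r (r/2) = 2 * s * ell s r (r/2) * (r/2)⁻¹ := by
    simp only [ellD, ell, show r - r/2 = r/2 by ring]
    rw [Real.rpow_sub hr2, Real.rpow_one, div_eq_mul_inv]
    ring
  have hfrac : (r/2)⁻¹ * (r/2 - 1) ≤ 1 := by
    rw [inv_mul_le_iff₀ hr2]; linarith
  have hell : 0 ≤ ell s r (r/2) := Real.rpow_nonneg (by linarith : (0:ℝ) ≤ r - r/2) _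
  calc ellD s r (r/2) * (r/2 - 1) = 2 * s * ell s r (r/2) * ((r/2)⁻¹ * (r/2 - 1)) := by
        rw [hsplit]; ring
    _ ≤ 2 * s * ell s r (r/2) * 1 := by gcongr
    _ = 2 * s * ell s r (r/2) := mul_one _

theorem eight_le_of_two_rpow_le (hs : s ∈ Ioc 0 1) (hr : (2:ℝ) ^ (3 / s) ≤ r) : 8 ≤ r := by
  have h3 : (3:ℝ) ≤ 3 / s := by rw [le_div_iff₀ hs.1]; nlinarith [hs.2]
  calc (8:ℝ) = 2 ^ (3:ℝ) := by norm_num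
    _ ≤ 2 ^ (3 / s) := Real.rpow_le_rpow_of_exponent_le one_le_two h3
    _ ≤ r := hr

theorem ell_half_le (hs : s ∈ Ioc 0 1) (hr : (2:ℝ) ^ (3 / s) ≤ r) :
    ell s r (r/2) ≤ 1/16 := by
  obtain ⟨hs0, hs1⟩ := hs
  have hbase : (2:ℝ) ^ (3/s - 1) ≤ r/2 := by
    rw [Real.rpow_sub two_pos, Real.rpow_one]; linarith
  calc ell s r (r/2) = (r/2) ^ (-(2*s)) := by rw [ell, show r - r/2 = r/2 by ring]
    _ ≤ ((2:ℝ) ^ (3/s - 1)) ^ (-(2*s)) :=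
        Real.rpow_le_rpow_of_nonpos (by positivity) hbase (by linarith)
    _ = (2:ℝ) ^ (2*s - 6) := by
        rw [← Real.rpow_mul zero_le_two]; congr 1; field_simp; ring
    _ ≤ (2:ℝ) ^ (-4:ℝ) := Real.rpow_le_rpow_of_exponent_le one_le_two (by linarith)
    _ = 1/16 := by norm_num [Real.rpow_neg]

theorem gammaR_mem_Ioc (hs : s ∈ Ioc 0 1) (hr : (2:ℝ) ^ (3 / s) ≤ r) :
    gammaR s r ∈ Ioc 0 2 := by
  have hA := ell_half_le hs hr
  have hr8 := eight_le_of_two_rpow_le hs hr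
  have hB := ellD_half_mul_le (r := r) hs.1.le (by linarith)
  have hD : 1/2 ≤ (gammaR s r)⁻¹ := by
    have hell : 0 ≤ ell s r (r/2) := Real.rpow_nonneg (by linarith) _
    rw [gammaR, inv_inv, ell_sub_one]
    nlinarith [mul_le_mul_of_nonneg_right hs.2 hell]
  have hpos : 0 < gammaR s r := inv_pos.1 (by linarith)
  refine ⟨hpos, ?_⟩
  rw [← inv_inv (gammaR s r)]
  calc ((gammaR s r)⁻¹)⁻¹ ≤ (1/2)⁻¹ := inv_anti₀ (by norm_num) hD
    _ = 2 := by norm_num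

theorem hMid_half : hMid s r (r/2) = 0 := by
  simp [hMid]

theorem hMid_sub_one (hγ : gammaR s r ≠ 0) : hMid s r (r - 1) = 1 := by
  have hD : ell s r (r - 1) - ell s r (r/2) - ellD s r (r/2) * (r/2 - 1) = (gammaR s r)⁻¹ := by
    rw [gammaR, inv_inv]
  rw [hMid, show r - 1 - r/2 = r/2 - 1 by ring, hD, mul_inv_cancel₀ hγ]

theorem hasDerivAt_hMid (ht : t < r) :
    HasDerivAt (hMid s r) (gammaR s r * (ellD s r t - ellD s r (r/2))) t := by
  have h := (((hasDerivAt_ell (s := s) ht).sub_const (ell s r (r/2))).sub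
    (((hasDerivAt_id t).sub_const (r/2)).const_mul (ellD s r (r/2)))).const_mul (gammaR s r)
  exact h.congr_deriv (by ring)

theorem hMid_monotoneOn (hs : 0 ≤ s) (hγ : 0 ≤ gammaR s r) :
    MonotoneOn (hMid s r) (Icc (r/2) (r - 1)) := by
  refine monotoneOn_of_hasDerivWithinAt_nonneg (convex_Icc _ _)
    (f' := fun x => gammaR s r * (ellD s r x - ellD s r (r/2)))
    (fun x hx => (hasDerivAt_hMid (by linarith [hx.2])).continuousAt.continuousWithinAt)
    (fun x hx => ?_) (fun x hx => ?_)
  all_goals rw [interior_Icc] at hx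
  · exact (hasDerivAt_hMid (by linarith [hx.2])).hasDerivWithinAt
  · have hr : r/2 < r := by linarith [hx.1, hx.2]
    have hx' : x < r := by linarith [hx.2]
    exact mul_nonneg hγ (sub_nonneg.2 (ellD_monotoneOn hs hr hx' hx.1.le))

theorem hBar_of_lt_half (ht : t < r/2) : hBar s r t = 0 := if_pos ht

theorem hBar_of_sub_one_le (hr : 2 ≤ r) (ht : r - 1 ≤ t) : hBar s r t = 1 := by
  rw [hBar, if_neg (by linarith), if_neg (by linarith)]

theorem hBar_eq_hMid (hr : 2 ≤ r) (hγ : gammaR s r ≠ 0) (h₁ : r/2 ≤ t) (h₂ : t ≤ r - 1) :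
    hBar s r t = hMid s r t := by
  rcases h₂.lt_or_eq with h₂ | rfl
  · rw [hBar, if_neg h₁.not_gt, if_pos h₂, hMid]
  · rw [hBar_of_sub_one_le hr le_rfl, hMid_sub_one hγ]

theorem hBar_of_le_half (hr : 2 ≤ r) (hγ : gammaR s r ≠ 0) (ht : t ≤ r/2) :
    hBar s r t = 0 := by
  rcases ht.lt_or_eq with ht | rfl
  · exact hBar_of_lt_half ht
  · rw [hBar_eq_hMid hr hγ le_rfl (by linarith), hMid_half]

theorem hBar_mem_Icc (hs : 0 ≤ s) (hr : 2 ≤ r) (hγ : 0 < gammaR s r) :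
    hBar s r t ∈ Icc 0 1 := by
  rcases lt_or_ge t (r/2) with h₁ | h₁
  · simp [hBar_of_lt_half h₁]
  rcases lt_or_ge t (r - 1) with h₂ | h₂
  · have hmem : t ∈ Icc (r/2) (r - 1) := ⟨h₁, h₂.le⟩
    have hhalf : r/2 ∈ Icc (r/2) (r - 1) := ⟨le_rfl, by linarith⟩
    have hend : r - 1 ∈ Icc (r/2) (r - 1) := ⟨by linarith, le_rfl⟩
    rw [hBar_eq_hMid hr hγ.ne' h₁ h₂.le]
    constructor
    · simpa [hMid_half] using hMid_monotoneOn hs hγ.le hhalf hmem h₁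
    · simpa [hMid_sub_one hγ.ne'] using hMid_monotoneOn hs hγ.le hmem hend h₂.le
  · simp [hBar_of_sub_one_le hr h₂]

theorem hasDerivWithinAt_hBar (hr : 2 ≤ r) (hγ : gammaR s r ≠ 0) (ht : t ≤ r - 1) :
    HasDerivWithinAt (hBar s r) (hBarD s r t) (Iic (r - 1)) t := by
  rcases lt_trichotomy t (r/2) with h | rfl | h
  · rw [hBarD, if_pos h.le]
    refine ((hasDerivAt_const t (0:ℝ)).congr_of_eventuallyEq ?_).hasDerivWithinAt
    filter_upwards [Iio_mem_nhds h] with x hx using hBar_of_lt_half hx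
  · rw [hBarD, if_pos le_rfl]
    have hleft : HasDerivWithinAt (hBar s r) 0 (Iic (r/2)) (r/2) :=
      (hasDerivWithinAt_const _ _ 0).congr (fun x hx => hBar_of_le_half hr hγ hx)
        (hBar_of_le_half hr hγ le_rfl)
    have hright : HasDerivWithinAt (hBar s r) 0 (Icc (r/2) (r - 1)) (r/2) := by
      have h := hasDerivAt_hMid (s := s) (show r/2 < r by linarith)
      rw [sub_self, mul_zero] at h
      exact h.hasDerivWithinAt.congr (fun x hx => hBar_eq_hMid hr hγ hx.1 hx.2)
        (hBar_eq_hMid hr hγ le_rfl ht)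
    simpa only [Iic_union_Icc_eq_Iic ht] using hleft.union hright
  · rw [hBarD, if_neg h.not_ge]
    refine (hasDerivAt_hMid (by linarith)).hasDerivWithinAt.congr_of_eventuallyEq ?_
      (hBar_eq_hMid hr hγ h.le ht)
    filter_upwards [mem_nhdsWithin_of_mem_nhds (Ioi_mem_nhds h), self_mem_nhdsWithin]
      with x hx₁ hx₂ using hBar_eq_hMid hr hγ (le_of_lt hx₁) hx₂

theorem hasDerivAt_hBarD (h₁ : r/2 < t) (h₂ : t < r) :
    HasDerivAt (hBarD s r) (gammaR s r * ellDD s r t) t := by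
  have h := ((hasDerivAt_ellD (s := s) h₂).sub_const (ellD s r (r/2))).const_mul (gammaR s r)
  refine h.congr_of_eventuallyEq ?_
  filter_upwards [Ioi_mem_nhds h₁] with x hx using if_neg (not_le.2 hx)

theorem hBarD_eq_max (hs : 0 ≤ s) (hγ : 0 ≤ gammaR s r) (hr : 0 < r) (ht : t < r) :
    hBarD s r t = max (gammaR s r * (ellD s r t - ellD s r (r/2))) 0 := by
  have hmono := ellD_monotoneOn (r := r) hs
  have hhalf : r/2 ∈ Iio r := by simp only [mem_Iio]; linarith
  rcases le_or_gt t (r/2) with h | h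
  · rw [hBarD, if_pos h, max_eq_right]
    exact mul_nonpos_of_nonneg_of_nonpos hγ (sub_nonpos.2 (hmono ht hhalf h))
  · rw [hBarD, if_neg h.not_ge, max_eq_left]
    exact mul_nonneg hγ (sub_nonneg.2 (hmono hhalf ht h.le))

theorem gammaR_mul_ellDD_le (hs : s ∈ Icc 0 1) (hγ : gammaR s r ∈ Icc 0 2) (ht : t ≤ r) :
    |gammaR s r * ellDD s r t| ≤ 12 * (r - t) ^ (-(2*s) - 2) := by
  have hp : (0:ℝ) ≤ (r - t) ^ (-(2*s) - 2) := Real.rpow_nonneg (by linarith) _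
  have hc : gammaR s r * (2*s*(2*s+1)) ≤ 12 := by
    have : 2*s*(2*s+1) ≤ 6 := by nlinarith [hs.1, hs.2]
    nlinarith [hγ.1, hγ.2, hs.1]
  have heq :
      gammaR s r * ellDD s r t = gammaR s r * (2*s*(2*s+1)) * (r - t) ^ (-(2*s) - 2) := by
    rw [ellDD]; ring
  rw [heq, abs_of_nonneg (mul_nonneg (mul_nonneg hγ.1 (by nlinarith [hs.1])) hp)]
  exact mul_le_mul_of_nonneg_right hc hp

theorem abs_hBarD_le (hs : s ∈ Icc 0 1) (hγ : gammaR s r ∈ Icc 0 2) (h₁ : r/2 < t)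
    (h₂ : t < r) :
    |hBarD s r t| ≤ 4 * (r - t) ^ (-(2*s) - 1) := by
  have hmono : ellD s r (r/2) ≤ ellD s r t :=
    ellD_monotoneOn hs.1 (show r/2 < r by linarith) h₂ h₁.le
  have hhalf := ellD_nonneg (r := r) (t := r/2) hs.1 (by linarith)
  have hp : (0:ℝ) ≤ (r - t) ^ (-(2*s) - 1) := Real.rpow_nonneg (by linarith) _
  rw [hBarD, if_neg h₁.not_ge, abs_of_nonneg (mul_nonneg hγ.1 (sub_nonneg.2 hmono))]
  calc gammaR s r * (ellD s r t - ellD s r (r/2)) ≤ gammaR s r * ellD s r t :=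
        mul_le_mul_of_nonneg_left (by linarith) hγ.1
    _ = gammaR s r * (2*s) * (r - t) ^ (-(2*s) - 1) := by rw [ellD]; ring
    _ ≤ 4 * (r - t) ^ (-(2*s) - 1) := by
        gcongr; nlinarith [hγ.1, hγ.2, hs.1, hs.2]

theorem lipschitzOnWith_hBarD (hs : s ∈ Icc 0 1) (hγ : gammaR s r ∈ Icc 0 2) (hr : 0 < r) :
    LipschitzOnWith 12 (hBarD s r) (Iic (r - 1)) := by
  have hlin : LipschitzOnWith 12 (fun u => gammaR s r * (ellD s r u - ellD s r (r/2)))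
      (Iic (r - 1)) := by
    refine (convex_Iic _).lipschitzOnWith_of_nnnorm_hasDerivWithin_le
      (fun x hx => (((hasDerivAt_ellD (by linarith [mem_Iic.1 hx])).sub_const
        (ellD s r (r/2))).const_mul (gammaR s r)).hasDerivWithinAt) (fun x hx => ?_)
    have hx : 1 ≤ r - x := by linarith [mem_Iic.1 hx]
    rw [← NNReal.coe_le_coe, coe_nnnorm, Real.norm_eq_abs, NNReal.coe_ofNat]
    calc |gammaR s r * ellDD s r x| ≤ 12 * (r - x) ^ (-(2*s) - 2) :=
          gammaR_mul_ellDD_le hs hγ (by linarith)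
      _ ≤ 12 * 1 := by
          gcongr; exact Real.rpow_le_one_of_one_le_of_nonpos hx (by linarith [hs.1])
      _ = 12 := mul_one _
  have hmax := (LipschitzWith.id.max_const (0:ℝ)).comp_lipschitzOnWith hlin
  rw [one_mul] at hmax
  intro x hx y hy
  rw [hBarD_eq_max hs.1 hγ.1 hr (by linarith [mem_Iic.1 hx]),
    hBarD_eq_max hs.1 hγ.1 hr (by linarith [mem_Iic.1 hy])]
  exact hmax hx hy

end

/-- properties of the profile `h`: it is `C^{1,1}` on `[0, r-1]`, takes
values in `[0,1]`, satisfies `h(r/2)=0`, `h'(r/2)=0`, `h(r-1)=1`, and enjoys the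
pointwise derivative bounds `|h'| ≤ 4(r-t)^{-2s-1}`, `|h''| ≤ 12(r-t)^{-2s-2}`
on `(r/2, r-1)`. -/
theorem statement_11 (s r : ℝ) (hs : s ∈ Set.Ioo (0 : ℝ) 1) (hr : (2 : ℝ) ^ (3 / s) ≤ r) :
    hBar s r (r/2) = 0 ∧ hBar s r (r - 1) = 1 ∧ hBarD s r (r/2) = 0 ∧
    (∀ t, 0 ≤ hBar s r t ∧ hBar s r t ≤ 1) ∧
    (∀ t ∈ Icc (0 : ℝ) (r - 1),
      HasDerivWithinAt (hBar s r) (hBarD s r t) (Icc (0 : ℝ) (r - 1)) t) ∧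
    (∃ L : NNReal, LipschitzOnWith L (hBarD s r) (Icc (0 : ℝ) (r - 1))) ∧
    (∀ t ∈ Ioo (r/2) (r - 1),
      |hBarD s r t| ≤ 4 * (r - t) ^ (-(2*s) - 1) ∧
      ∃ d : ℝ, HasDerivAt (hBarD s r) d t ∧ |d| ≤ 12 * (r - t) ^ (-(2*s) - 2)) := by
  have hs' : s ∈ Ioc 0 1 := Ioo_subset_Ioc_self hs
  have hsIcc : s ∈ Icc 0 1 := Ioo_subset_Icc_self hs
  have hr2 : (2:ℝ) ≤ r := by linarith [eight_le_of_two_rpow_le hs' hr]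
  have hγ := gammaR_mem_Ioc hs' hr
  have hγIcc : gammaR s r ∈ Icc 0 2 := Ioc_subset_Icc_self hγ
  refine ⟨hBar_of_le_half hr2 hγ.1.ne' le_rfl, hBar_of_sub_one_le hr2 le_rfl, if_pos le_rfl,
    fun t => hBar_mem_Icc hs.1.le hr2 hγ.1, fun t ht => ?_, ⟨12, ?_⟩, fun t ht => ⟨?_, ?_⟩⟩
  · exact (hasDerivWithinAt_hBar hr2 hγ.1.ne' ht.2).mono Icc_subset_Iic_self
  · exact (lipschitzOnWith_hBarD hsIcc hγIcc (by linarith)).mono Icc_subset_Iic_self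
  · exact abs_hBarD_le hsIcc hγIcc ht.1 (by linarith [ht.2])
  · exact ⟨_, hasDerivAt_hBarD ht.1 (by linarith [ht.2]),
      gammaR_mul_ellDD_le hsIcc hγIcc (by linarith [ht.2])⟩

end
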